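/- arXiv:2410.23509 — 2 statements merged into one kernel-verified Lean document; each statement's English description precedes it below -/
import Mathlib

section
/- Let λ₁, λ₂, α₁, α₂, r > 0, Ψ(z) = -λ₁ z/(α₁+z) + λ₂ z/(α₂-z), and let -r_I, r_S be the roots of Ψ(z) = r with -α₁ < -r_I < 0 < r_S < α₂. Then for all z with -r_I < z < r_S, r/(r - Ψ(z)) = (r_I/α₁ + ((α₁ - r_I)/α₁)·r_I/(r_I + z)) · (r_S/α₂ + ((α₂ - r_S)/α₂)·r_S/(r_S - z)). -/
theorem compound_poisson_wiener_hopf (lam1 lam2 alpha1 alpha2 r rI rS : ℝ)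
    (hl1 : 0 < lam1) (hl2 : 0 < lam2) (ha1 : 0 < alpha1) (ha2 : 0 < alpha2)
    (hr : 0 < r)
    (hbounds : -alpha1 < -rI ∧ -rI < 0 ∧ 0 < rS ∧ rS < alpha2)
    (hI : -lam1 * (-rI) / (alpha1 + (-rI)) + lam2 * (-rI) / (alpha2 - (-rI)) = r)
    (hS : -lam1 * rS / (alpha1 + rS) + lam2 * rS / (alpha2 - rS) = r) :
    ∀ z : ℝ, -rI < z → z < rS →
      r / (r - (-lam1 * z / (alpha1 + z) + lam2 * z / (alpha2 - z))) =
        (rI / alpha1 + (alpha1 - rI) / alpha1 * (rI / (rI + z))) *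
          (rS / alpha2 + (alpha2 - rS) / alpha2 * (rS / (rS - z))) := by
  obtain ⟨h1, h2, h3, h4⟩ := hbounds
  have hrI : 0 < rI := by linarith
  have hrIa : rI < alpha1 := by linarith
  have hd1 : alpha1 + -rI ≠ 0 := by intro h; linarith
  have hd2 : alpha2 - -rI ≠ 0 := by intro h; linarith
  have hd3 : alpha1 + rS ≠ 0 := by positivity
  have hd4 : alpha2 - rS ≠ 0 := by intro h; linarith
  have hE1 : lam1 * rI * (alpha2 + rI) - lam2 * rI * (alpha1 - rI)
      = r * ((alpha1 - rI) * (alpha2 + rI)) := by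
    field_simp at hI
    linear_combination hI
  have hE2 : -lam1 * rS * (alpha2 - rS) + lam2 * rS * (alpha1 + rS)
      = r * ((alpha1 + rS) * (alpha2 - rS)) := by
    field_simp at hS
    linear_combination hS
  set B := r * (alpha2 - alpha1) + lam1 * alpha2 - lam2 * alpha1 with hBdef
  set a := r + lam1 + lam2 with hadef
  have hE1' : a * rI ^ 2 + B * rI - r * alpha1 * alpha2 = 0 := by
    linear_combination hE1
  have hE2' : -a * rS ^ 2 + B * rS + r * alpha1 * alpha2 = 0 := by
    linear_combination -hE2
  have hsum : rS + rI ≠ 0 := by positivity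
  have hB : B = a * (rS - rI) := by
    have h : B * (rS + rI) = a * (rS - rI) * (rS + rI) := by
      linear_combination hE2' + hE1'
    exact mul_right_cancel₀ hsum h
  have hC : r * alpha1 * alpha2 = a * rI * rS := by
    linear_combination hE2' - rS * hB
  intro z hz1 hz2
  have hz3 : (0:ℝ) < alpha1 + z := by linarith
  have hz4 : (0:ℝ) < alpha2 - z := by linarith
  have hz5 : (0:ℝ) < rI + z := by linarith
  have hz6 : (0:ℝ) < rS - z := by linarith
  have ha' : (0:ℝ) < a := by positivity
  have hden : r - (-lam1 * z / (alpha1 + z) + lam2 * z / (alpha2 - z))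
      = a * (rS - z) * (rI + z) / ((alpha1 + z) * (alpha2 - z)) := by
    rw [eq_div_iff (by positivity)]
    field_simp
    linear_combination z * hB + hC
  have hR1 : rI / alpha1 + (alpha1 - rI) / alpha1 * (rI / (rI + z))
      = rI * (alpha1 + z) / (alpha1 * (rI + z)) := by
    field_simp
    ring
  have hR2 : rS / alpha2 + (alpha2 - rS) / alpha2 * (rS / (rS - z))
      = rS * (alpha2 - z) / (alpha2 * (rS - z)) := by
    field_simp
    ring
  rw [hden, hR1, hR2, div_div_eq_mul_div, div_mul_div_comm,
    div_eq_div_iff (by positivity) (by positivity)]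
  linear_combination ((alpha1 + z) * (alpha2 - z) * (rI + z) * (rS - z)) * hC
end

section
/- Let r_I, r_S > 0, π_I, π_S ∈ [0,1), and E_I, E_S, F_I, F_S, G_I, G_S as above, and let δ > 0. Then the equation u - 2δ - E_I - E_S = (-E_I F_S e^{r_S u} - E_S F_I e^{r_I u} + 2 E_S F_S G_I)/(e^{(r_I+r_S)u} - G_I G_S) has a unique solution u > 0. -/
set_option linter.unusedTactic false
set_option linter.unreachableTactic false
set_option linter.unnecessarySeqFocus false


set_option maxHeartbeats 1000000 in
lemma lemA (th x y z : ℝ) (hth0 : 0 < th) (hth1 : th < 1)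
    (hx0 : 0 < x) (hx1 : x ≤ 1) (hy0 : 0 < y) (hy1 : y ≤ 1)
    (hz0 : 0 < z) (hz1 : z ≤ 1)
    (hC1 : x ≤ (1 - th) + th * x * y) (hC2 : y ≤ th + (1 - th) * x * y) :
    0 ≤ th * (1 - th) * (1 - x * y * z) ^ 2 * ((1 - th) + th * z)
      - th * x * ((1 - th) + th * z - y * z) ^ 2
      - (1 - th) * y * z * (1 - x * ((1 - th) + th * z)) ^ 2 := by
  rcases eq_or_lt_of_le hy1 with hy | hy
  · -- y = 1 forces x = 1 and expression = 0
    have hx : x = 1 := by nlinarith [hC2, hC1]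
    rw [hx, hy]; ring_nf; nlinarith [sq_nonneg (1-z)]
  · -- y < 1 : Lagrange interpolation in x between the two constraint boundaries
    have h1z : (0:ℝ) ≤ 1-z := by linarith
    have h1y : (0:ℝ) < 1-y := by linarith
    have h1t : (0:ℝ) < 1-th := by linarith
    have hd : (0:ℝ) < th+(1-th)*z := by positivity
    have hS1 : 0 ≤ ((1-th)*(1-z))^2 + ((1-th)*(1-z))*(1-y)*(th+(1-th)*z)
        + ((1-th)*(1-z))*z*(1-y)^2 + z*(th+(1-th)*z)*(1-y)^2 := by positivity
    have hRH : 0 ≤ th^2*(1-y)*(1-z)*(1-th)*(((1-th)*(1-z))^2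
        + ((1-th)*(1-z))*(1-y)*(th+(1-th)*z)
        + ((1-th)*(1-z))*z*(1-y)^2 + z*(th+(1-th)*z)*(1-y)^2) := by positivity
    have hRL : 0 ≤ th^2*y*(1-y)*(1-z)*(1-th)*((1-th)-z*(y-th))^2 := by positivity
    have hhi : (0:ℝ) < (1-th)+th*z := by positivity
    have hnegc2 : 0 ≤ (1-th)*y*z*((1-th)+th*z)*(((1-th)+th*z) - th*y*z) := by
      have h6 : (0:ℝ) ≤ ((1-th)+th*z) - th*y*z := by
        nlinarith [mul_nonneg (mul_nonneg hth0.le hz0.le) h1y.le]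
      positivity
    have hs1 : 0 ≤ (1-th) - x*(1-th*y) := by nlinarith [hC1]
    have hs2 : 0 ≤ x*((1-th)*y) - (y-th) := by nlinarith [hC2]
    have hty : 0 < 1 - th*y := by nlinarith
    have hkey : (th * (1 - th) * (1 - x * y * z) ^ 2 * ((1 - th) + th * z)
      - th * x * ((1 - th) + th * z - y * z) ^ 2
      - (1 - th) * y * z * (1 - x * ((1 - th) + th * z)) ^ 2)
        * ((th*(1-y)^2) * (1-th*y) * ((1-th)*y))
      = (th^2*y*(1-y)*(1-z)*(1-th)*((1-th)-z*(y-th))^2)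
          * ((1-th) - x*(1-th*y)) * (1-th*y)
        + (th^2*(1-y)*(1-z)*(1-th)*(((1-th)*(1-z))^2
            + ((1-th)*(1-z))*(1-y)*(th+(1-th)*z)
            + ((1-th)*(1-z))*z*(1-y)^2 + z*(th+(1-th)*z)*(1-y)^2))
          * (x*((1-th)*y) - (y-th)) * ((1-th)*y)
        + ((1-th)*y*z*((1-th)+th*z)*(((1-th)+th*z) - th*y*z))
          * (x*((1-th)*y) - (y-th)) * ((1-th) - x*(1-th*y)) * (th*(1-y)^2) := by
      ring
    have hpos : 0 < (th*(1-y)^2) * (1-th*y) * ((1-th)*y) := by positivity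
    have hterm1 : 0 ≤ (th^2*y*(1-y)*(1-z)*(1-th)*((1-th)-z*(y-th))^2)
        * ((1-th) - x*(1-th*y)) * (1-th*y) :=
      mul_nonneg (mul_nonneg hRL hs1) hty.le
    have hterm2 : 0 ≤ (th^2*(1-y)*(1-z)*(1-th)*(((1-th)*(1-z))^2
            + ((1-th)*(1-z))*(1-y)*(th+(1-th)*z)
            + ((1-th)*(1-z))*z*(1-y)^2 + z*(th+(1-th)*z)*(1-y)^2))
          * (x*((1-th)*y) - (y-th)) * ((1-th)*y) :=
      mul_nonneg (mul_nonneg hRH hs2) (by positivity)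
    have hterm3 : 0 ≤ ((1-th)*y*z*((1-th)+th*z)*(((1-th)+th*z) - th*y*z))
          * (x*((1-th)*y) - (y-th)) * ((1-th) - x*(1-th*y)) * (th*(1-y)^2) :=
      mul_nonneg (mul_nonneg (mul_nonneg hnegc2 hs2) hs1) (by positivity)
    have hmul : 0 ≤ (th * (1 - th) * (1 - x * y * z) ^ 2 * ((1 - th) + th * z)
      - th * x * ((1 - th) + th * z - y * z) ^ 2
      - (1 - th) * y * z * (1 - x * ((1 - th) + th * z)) ^ 2)
        * ((th*(1-y)^2) * (1-th*y) * ((1-th)*y)) := by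
      rw [hkey]; linarith [hterm1, hterm2, hterm3]
    exact (mul_nonneg_iff_of_pos_right hpos).mp hmul


set_option maxHeartbeats 1000000 in
lemma lemB (th x y w v : ℝ) (hth0 : 0 < th) (hth1 : th < 1)
    (hx0 : 0 < x) (hx1 : x ≤ 1) (hy0 : 0 < y) (hy1 : y ≤ 1)
    (hC1 : x ≤ (1 - th) + th * x * y) (hC2 : y ≤ th + (1 - th) * x * y)
    (hw0 : 0 < w) (hv0 : 0 < v) (hz1 : w * v < 1)
    (hw : w < (1 - th) + th * (w * v)) (hv : v < th + (1 - th) * (w * v)) :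
    th * x * w * (1 - y * v) ^ 2 + (1 - th) * y * v * (1 - x * w) ^ 2
      < th * (1 - th) * (1 - x * y * (w * v)) ^ 2 := by
  have hz0 : 0 < w * v := mul_pos hw0 hv0
  have hC1' : y ≤ (1 - (1 - th)) + (1 - th) * y * x := by nlinarith [hC2]
  have hC2' : x ≤ (1 - th) + (1 - (1 - th)) * y * x := by nlinarith [hC1]
  have hA1 := lemA th x y (w*v) hth0 hth1 hx0 hx1 hy0 hy1 hz0 hz1.le hC1 hC2
  have hA2 := lemA (1-th) y x (w*v) (by linarith) (by linarith) hy0 hy1 hx0 hx1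
    hz0 hz1.le hC1' hC2'
  -- notation: hi = (1-th)+th*z, d = th+(1-th)*z, z = w*v
  have hhd : ((1-th)+th*(w*v)) * (th+(1-th)*(w*v)) - w*v
      = th*(1-th)*(1-w*v)^2 := by ring
  have hhdpos : 0 < ((1-th)+th*(w*v)) * (th+(1-th)*(w*v)) - w*v := by
    rw [hhd]
    have h1 : (0:ℝ) < 1 - w*v := by linarith
    have h2 : (0:ℝ) < 1 - th := by linarith
    exact mul_pos (mul_pos hth0 h2) (pow_pos h1 2)
  have hdpos : 0 < th+(1-th)*(w*v) := by nlinarith [mul_pos hw0 hv0]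
  have hwd : 0 < w * (th+(1-th)*(w*v)) - w*v := by nlinarith [mul_lt_mul_of_pos_left hv hw0]
  have hhiw : 0 < ((1-th)+th*(w*v)) - w := by linarith
  have hkap : 0 < th*x + (1-th)*x^2*y*(w*v) := by
    have h2 : (0:ℝ) < 1 - th := by linarith
    have := mul_pos (mul_pos (mul_pos h2 (pow_pos hx0 2)) hy0) hz0
    nlinarith [mul_pos hth0 hx0]
  -- Lagrange interpolation identity for the quadratic q in w
  have hkey : (th*(1-th)*(1-x*y*(w*v))^2*w - th*x*(w-y*(w*v))^2
        - (1-th)*y*(w*v)*(1-x*w)^2)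
        * ((((1-th)+th*(w*v)) * (th+(1-th)*(w*v)) - w*v) * (th+(1-th)*(w*v)))
      = ((w*v) * ((1-th) * (1 - (1-th)) * (1 - y * x * (w*v)) ^ 2 * ((1 - (1-th)) + (1-th) * (w*v))
            - (1-th) * y * ((1 - (1-th)) + (1-th) * (w*v) - x * (w*v)) ^ 2
            - (1 - (1-th)) * x * (w*v) * (1 - y * ((1 - (1-th)) + (1-th) * (w*v))) ^ 2))
          * (((1-th)+th*(w*v)) - w)
        + (th * (1 - th) * (1 - x * y * (w*v)) ^ 2 * ((1 - th) + th * (w*v))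
            - th * x * ((1 - th) + th * (w*v) - y * (w*v)) ^ 2
            - (1 - th) * y * (w*v) * (1 - x * ((1 - th) + th * (w*v))) ^ 2)
          * ((w * (th+(1-th)*(w*v)) - w*v) * (th+(1-th)*(w*v)))
        + (th*x + (1-th)*x^2*y*(w*v))
          * ((w * (th+(1-th)*(w*v)) - w*v) * (((1-th)+th*(w*v)) - w)
             * (((1-th)+th*(w*v)) * (th+(1-th)*(w*v)) - w*v)) := by
    ring
  have hq : 0 < th*(1-th)*(1-x*y*(w*v))^2*w - th*x*(w-y*(w*v))^2
      - (1-th)*y*(w*v)*(1-x*w)^2 := by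
    have hrhs : 0 < ((w*v) * ((1-th) * (1 - (1-th)) * (1 - y * x * (w*v)) ^ 2 * ((1 - (1-th)) + (1-th) * (w*v))
            - (1-th) * y * ((1 - (1-th)) + (1-th) * (w*v) - x * (w*v)) ^ 2
            - (1 - (1-th)) * x * (w*v) * (1 - y * ((1 - (1-th)) + (1-th) * (w*v))) ^ 2))
          * (((1-th)+th*(w*v)) - w)
        + (th * (1 - th) * (1 - x * y * (w*v)) ^ 2 * ((1 - th) + th * (w*v))
            - th * x * ((1 - th) + th * (w*v) - y * (w*v)) ^ 2
            - (1 - th) * y * (w*v) * (1 - x * ((1 - th) + th * (w*v))) ^ 2)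
          * ((w * (th+(1-th)*(w*v)) - w*v) * (th+(1-th)*(w*v)))
        + (th*x + (1-th)*x^2*y*(w*v))
          * ((w * (th+(1-th)*(w*v)) - w*v) * (((1-th)+th*(w*v)) - w)
             * (((1-th)+th*(w*v)) * (th+(1-th)*(w*v)) - w*v)) := by
      have t1 : 0 ≤ ((w*v) * ((1-th) * (1 - (1-th)) * (1 - y * x * (w*v)) ^ 2 * ((1 - (1-th)) + (1-th) * (w*v))
            - (1-th) * y * ((1 - (1-th)) + (1-th) * (w*v) - x * (w*v)) ^ 2
            - (1 - (1-th)) * x * (w*v) * (1 - y * ((1 - (1-th)) + (1-th) * (w*v))) ^ 2))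
          * (((1-th)+th*(w*v)) - w) :=
        mul_nonneg (mul_nonneg hz0.le hA2) hhiw.le
      have t2 : 0 ≤ (th * (1 - th) * (1 - x * y * (w*v)) ^ 2 * ((1 - th) + th * (w*v))
            - th * x * ((1 - th) + th * (w*v) - y * (w*v)) ^ 2
            - (1 - th) * y * (w*v) * (1 - x * ((1 - th) + th * (w*v))) ^ 2)
          * ((w * (th+(1-th)*(w*v)) - w*v) * (th+(1-th)*(w*v))) :=
        mul_nonneg hA1 (mul_nonneg hwd.le hdpos.le)
      have t3 : 0 < (th*x + (1-th)*x^2*y*(w*v))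
          * ((w * (th+(1-th)*(w*v)) - w*v) * (((1-th)+th*(w*v)) - w)
             * (((1-th)+th*(w*v)) * (th+(1-th)*(w*v)) - w*v)) :=
        mul_pos hkap (mul_pos (mul_pos hwd hhiw) hhdpos)
      linarith
    have hmul : 0 < (th*(1-x*y*(w*v))^2*w*(1-th) - th*x*(w-y*(w*v))^2
        - (1-th)*y*(w*v)*(1-x*w)^2)
        * ((((1-th)+th*(w*v)) * (th+(1-th)*(w*v)) - w*v) * (th+(1-th)*(w*v))) := by
      rw [show (th*(1-x*y*(w*v))^2*w*(1-th) - th*x*(w-y*(w*v))^2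
        - (1-th)*y*(w*v)*(1-x*w)^2) = (th*(1-th)*(1-x*y*(w*v))^2*w - th*x*(w-y*(w*v))^2
        - (1-th)*y*(w*v)*(1-x*w)^2) from by ring, hkey]
      exact hrhs
    have := (mul_pos_iff_of_pos_right (mul_pos hhdpos hdpos)).mp hmul
    linarith [this]
  -- divide by w
  have hgap : (th * (1 - th) * (1 - x * y * (w*v)) ^ 2
      - (th * x * w * (1 - y * v) ^ 2 + (1 - th) * y * v * (1 - x * w) ^ 2)) * w
      = th*(1-th)*(1-x*y*(w*v))^2*w - th*x*(w-y*(w*v))^2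
        - (1-th)*y*(w*v)*(1-x*w)^2 := by ring
  have hmul2 : 0 < (th * (1 - th) * (1 - x * y * (w*v)) ^ 2
      - (th * x * w * (1 - y * v) ^ 2 + (1 - th) * y * v * (1 - x * w) ^ 2)) * w := by
    rw [hgap]; exact hq
  have := (mul_pos_iff_of_pos_right hw0).mp hmul2
  linarith [this]


set_option maxHeartbeats 1000000 in
lemma lemB' (th x y a b : ℝ) (hth0 : 0 < th) (hth1 : th < 1)
    (hx0 : 0 < x) (hx1 : x ≤ 1) (hy0 : 0 < y) (hy1 : y ≤ 1)
    (hC1 : x ≤ (1 - th) + th * x * y) (hC2 : y ≤ th + (1 - th) * x * y)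
    (ha : 1 < a) (hb : 1 < b)
    (hA : a < th * (a * b) + (1 - th)) (hB : b < (1 - th) * (a * b) + th) :
    th * x * a * (b - y) ^ 2 + (1 - th) * y * b * (a - x) ^ 2
      < th * (1 - th) * (a * b - x * y) ^ 2 := by
  have ha0 : (0:ℝ) < a := by linarith
  have hb0 : (0:ℝ) < b := by linarith
  have hw0 : 0 < a⁻¹ := by positivity
  have hv0 : 0 < b⁻¹ := by positivity
  have hwv : a⁻¹ * b⁻¹ = (a*b)⁻¹ := by rw [mul_inv]
  have hab1 : 1 < a*b := by nlinarith
  have hz1 : a⁻¹ * b⁻¹ < 1 := by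
    rw [hwv]; exact inv_lt_one_of_one_lt₀ hab1
  have hw : a⁻¹ < (1 - th) + th * (a⁻¹ * b⁻¹) := by
    rw [hwv]
    have h1 : a⁻¹ * (a*b) = b := by field_simp <;> ring_nf
    have h2 : ((1 - th) + th * (a*b)⁻¹) * (a*b) = (1-th)*(a*b) + th := by field_simp <;> ring_nf
    calc a⁻¹ = a⁻¹ * (a*b) / (a*b) := by field_simp
      _ < ((1 - th) + th * (a*b)⁻¹) := by
          rw [div_lt_iff₀ (by positivity : (0:ℝ) < a*b), h1, h2]; linarith [hB]
  have hv : b⁻¹ < th + (1 - th) * (a⁻¹ * b⁻¹) := by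
    rw [hwv]
    have h1 : b⁻¹ * (a*b) = a := by field_simp <;> ring_nf
    have h2 : (th + (1 - th) * (a*b)⁻¹) * (a*b) = th*(a*b) + (1-th) := by field_simp <;> ring_nf
    calc b⁻¹ = b⁻¹ * (a*b) / (a*b) := by field_simp
      _ < (th + (1 - th) * (a*b)⁻¹) := by
          rw [div_lt_iff₀ (by positivity : (0:ℝ) < a*b), h1, h2]; linarith [hA]
  have h := lemB th x y a⁻¹ b⁻¹ hth0 hth1 hx0 hx1 hy0 hy1 hC1 hC2 hw0 hv0 hz1 hw hv
  have hmul := mul_lt_mul_of_pos_right h (by positivity : (0:ℝ) < (a*b)^2)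
  have e1 : (th * x * a⁻¹ * (1 - y * b⁻¹) ^ 2 + (1 - th) * y * b⁻¹ * (1 - x * a⁻¹) ^ 2) * (a*b)^2
      = th * x * a * (b - y) ^ 2 + (1 - th) * y * b * (a - x) ^ 2 := by
    field_simp <;> ring_nf
  have e2 : th * (1 - th) * (1 - x * y * (a⁻¹ * b⁻¹)) ^ 2 * (a*b)^2
      = th * (1 - th) * (a * b - x * y) ^ 2 := by
    field_simp <;> ring_nf
  rw [e1, e2] at hmul
  exact hmul


set_option maxHeartbeats 4000000 in
theorem threshold_equation_unique_root (rI rS piI piS delta : ℝ)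
    (hrI : 0 < rI) (hrS : 0 < rS)
    (hpiI : piI ∈ Set.Ico (0 : ℝ) 1) (hpiS : piS ∈ Set.Ico (0 : ℝ) 1)
    (hdelta : 0 < delta) :
    let EI := (1 - piI) / rI
    let ES := (1 - piS) / rS
    let FI := (rI + rS) / (rI + piI * rS)
    let FS := (rI + rS) / (piS * rI + rS)
    let GI := FI - 1
    let GS := FS - 1
    ∃! u : ℝ, 0 < u ∧
      u - 2 * delta - EI - ES =
        (-EI * FS * Real.exp (rS * u) - ES * FI * Real.exp (rI * u)
            + 2 * ES * FS * GI) /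
          (Real.exp ((rI + rS) * u) - GI * GS) := by
  obtain ⟨hpI0, hpI1⟩ := hpiI
  obtain ⟨hpS0, hpS1⟩ := hpiS
  intro EI ES FI FS GI GS
  have hEI : EI = (1 - piI) / rI := rfl
  have hES : ES = (1 - piS) / rS := rfl
  have hFI : FI = (rI + rS) / (rI + piI * rS) := rfl
  have hFS : FS = (rI + rS) / (piS * rI + rS) := rfl
  have hGI : GI = FI - 1 := rfl
  have hGS : GS = FS - 1 := rfl
  have hc : (0:ℝ) < rI + rS := by linarith
  have hd1 : (0:ℝ) < piS * rI + rS := by nlinarith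
  have hd2 : (0:ℝ) < rI + piI * rS := by nlinarith
  set x : ℝ := rS * (1 - piI) / (piS * rI + rS) with hxdef
  set y : ℝ := rI * (1 - piS) / (rI + piI * rS) with hydef
  have hx0 : 0 < x := by rw [hxdef]; apply div_pos (by nlinarith) hd1
  have hx1 : x ≤ 1 := by
    rw [hxdef, div_le_one hd1]; nlinarith
  have hy0 : 0 < y := by rw [hydef]; apply div_pos (by nlinarith) hd2
  have hy1 : y ≤ 1 := by
    rw [hydef, div_le_one hd2]; nlinarith
  have hxy1 : x * y ≤ 1 := by nlinarith
  have hxy0 : 0 ≤ x * y := by positivity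
  -- the normalized function f
  set c : ℝ := rI + rS with hcdef
  set f : ℝ → ℝ := fun u => u - 2 * delta - EI - ES +
      (c / (rI * rS)) * ((x * Real.exp (rS * u) + y * Real.exp (rI * u) - 2 * (x * y)) /
        (Real.exp (c * u) - x * y)) with hfdef
  have hDd : ∀ u : ℝ, 0 < u → 0 < Real.exp (c * u) - x * y := by
    intro u hu
    have h1 : (1:ℝ) < Real.exp (c * u) := by
      rw [show (1:ℝ) = Real.exp 0 by rw [Real.exp_zero]]
      exact Real.exp_lt_exp.mpr (by positivity)
    linarith
  -- the equation is equivalent to f u = 0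
  have hiff : ∀ u : ℝ, 0 < u →
      ((u - 2 * delta - EI - ES =
        (-EI * FS * Real.exp (rS * u) - ES * FI * Real.exp (rI * u)
            + 2 * ES * FS * GI) /
          (Real.exp ((rI + rS) * u) - GI * GS)) ↔ f u = 0) := by
    intro u hu
    have e1 : -EI * FS * Real.exp (rS * u) - ES * FI * Real.exp (rI * u)
        + 2 * ES * FS * GI
        = -((c / (rI * rS)) * (x * Real.exp (rS * u) + y * Real.exp (rI * u) - 2 * (x * y))) := by
      have k1 : EI * FS = (c / (rI * rS)) * x := by
        rw [hEI, hFS, hcdef, hxdef]; field_simp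
      have k2 : ES * FI = (c / (rI * rS)) * y := by
        rw [hES, hFI, hcdef, hydef]; field_simp
      have k3 : 2 * ES * FS * GI = (c / (rI * rS)) * (2 * (x * y)) := by
        rw [hES, hFS, hGI, hFI, hcdef, hxdef, hydef]; field_simp; ring
      linear_combination (-Real.exp (rS * u)) * k1 + (-Real.exp (rI * u)) * k2 + k3
    have e2 : Real.exp ((rI + rS) * u) - GI * GS = Real.exp (c * u) - x * y := by
      have : GI * GS = x * y := by
        rw [hGI, hGS, hFI, hFS, hxdef, hydef]; field_simp; ring
      rw [this, hcdef]
    rw [e1, e2, neg_div]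
    rw [hfdef]
    simp only []
    rw [mul_div_assoc]
    constructor
    · intro h; rw [h]; ring
    · intro h; linarith [h]
  -- derivative of f is positive on (0, ∞)
  have hasD : ∀ u : ℝ, 0 < u → HasDerivAt f
      (1 + (c / (rI * rS)) *
        (((x * (Real.exp (rS * u) * rS) + y * (Real.exp (rI * u) * rI)) * (Real.exp (c * u) - x * y)
          - (x * Real.exp (rS * u) + y * Real.exp (rI * u) - 2 * (x * y)) * (Real.exp (c * u) * c)) /
          (Real.exp (c * u) - x * y) ^ 2)) u := by
    intro u hu
    have h1 : HasDerivAt (fun t : ℝ => rS * t) rS u := by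
      simpa using (hasDerivAt_id u).const_mul rS
    have h2 : HasDerivAt (fun t : ℝ => rI * t) rI u := by
      simpa using (hasDerivAt_id u).const_mul rI
    have h3 : HasDerivAt (fun t : ℝ => c * t) c u := by
      simpa using (hasDerivAt_id u).const_mul c
    have hN : HasDerivAt (fun t : ℝ => x * Real.exp (rS * t) + y * Real.exp (rI * t) - 2 * (x * y))
        (x * (Real.exp (rS * u) * rS) + y * (Real.exp (rI * u) * rI)) u :=
      (((h1.exp).const_mul x).add ((h2.exp).const_mul y)).sub_const (2 * (x * y))
    have hDden : HasDerivAt (fun t : ℝ => Real.exp (c * t) - x * y)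
        (Real.exp (c * u) * c) u := (h3.exp).sub_const (x * y)
    have hq := hN.div hDden (ne_of_gt (hDd u hu))
    have hlin : HasDerivAt (fun t : ℝ => t - 2 * delta - EI - ES) 1 u := by
      simpa using (((hasDerivAt_id u).sub_const (2 * delta)).sub_const EI).sub_const ES
    exact hlin.add (hq.const_mul (c / (rI * rS)))
  have hderivpos : ∀ u : ℝ, 0 < u →
      0 < 1 + (c / (rI * rS)) *
        (((x * (Real.exp (rS * u) * rS) + y * (Real.exp (rI * u) * rI)) * (Real.exp (c * u) - x * y)
          - (x * Real.exp (rS * u) + y * Real.exp (rI * u) - 2 * (x * y)) * (Real.exp (c * u) * c)) /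
          (Real.exp (c * u) - x * y) ^ 2) := by
    intro u hu
    set a : ℝ := Real.exp (rI * u) with hadef
    set b : ℝ := Real.exp (rS * u) with hbdef
    have ha1 : 1 < a := by
      rw [hadef, show (1:ℝ) = Real.exp 0 by rw [Real.exp_zero]]
      exact Real.exp_lt_exp.mpr (by positivity)
    have hb1 : 1 < b := by
      rw [hbdef, show (1:ℝ) = Real.exp 0 by rw [Real.exp_zero]]
      exact Real.exp_lt_exp.mpr (by positivity)
    have hab : Real.exp (c * u) = a * b := by
      rw [hadef, hbdef, ← Real.exp_add]; congr 1; rw [hcdef]; ring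
    have hth0 : 0 < rI / c := by positivity
    have hth1 : rI / c < 1 := by rw [div_lt_one hc]; linarith
    -- convexity bounds
    have hA : a < (rI / c) * (a * b) + (1 - rI / c) := by
      have hne : c * u ≠ 0 := by positivity
      have hcvx := strictConvexOn_exp.2 (Set.mem_univ (c * u)) (Set.mem_univ 0) hne
        hth0 (by linarith : (0:ℝ) < 1 - rI / c) (by ring)
      simp only [smul_eq_mul, mul_zero, add_zero, Real.exp_zero, mul_one] at hcvx
      have harg : rI / c * (c * u) = rI * u := by field_simp
      rw [harg, ← hadef, hab] at hcvx
      linarith [hcvx]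
    have hB : b < (1 - rI / c) * (a * b) + rI / c := by
      have hne : c * u ≠ 0 := by positivity
      have hcvx := strictConvexOn_exp.2 (Set.mem_univ (c * u)) (Set.mem_univ 0) hne
        (by linarith : (0:ℝ) < 1 - rI / c) hth0 (by ring)
      simp only [smul_eq_mul, mul_zero, add_zero, Real.exp_zero, mul_one] at hcvx
      have harg : (1 - rI / c) * (c * u) = rS * u := by
        rw [hcdef]; field_simp; ring
      rw [harg, ← hbdef, hab] at hcvx
      linarith [hcvx]
    -- constraint inequalities
    have hC1 : x ≤ (1 - rI / c) + (rI / c) * x * y := by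
      have hid1 : rS + rI * (x * y) - c * x = rS * piI * (1 - x * y) := by
        rw [hxdef, hydef, hcdef]; field_simp; ring
      have h2 : (1 - rI / c) + (rI / c) * x * y - x = (rS + rI * (x * y) - c * x) / c := by
        rw [hcdef]; field_simp; ring
      have h3 : 0 ≤ (rS + rI * (x * y) - c * x) / c := by
        apply div_nonneg _ hc.le
        rw [hid1]; apply mul_nonneg (by positivity); linarith
      linarith [h2 ▸ h3]
    have hC2 : y ≤ rI / c + (1 - rI / c) * x * y := by
      have hid2 : rI + rS * (x * y) - c * y = rI * piS * (1 - x * y) := by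
        rw [hxdef, hydef, hcdef]; field_simp; ring
      have h2 : rI / c + (1 - rI / c) * x * y - y = (rI + rS * (x * y) - c * y) / c := by
        rw [hcdef]; field_simp; ring
      have h3 : 0 ≤ (rI + rS * (x * y) - c * y) / c := by
        apply div_nonneg _ hc.le
        rw [hid2]; apply mul_nonneg (by positivity); linarith
      linarith [h2 ▸ h3]
    have happ := lemB' (rI / c) x y a b hth0 hth1 hx0 hx1 hy0 hy1 hC1 hC2 ha1 hb1 hA hB
    -- multiply by c^2
    have hmul := mul_lt_mul_of_pos_right happ (by positivity : (0:ℝ) < c ^ 2)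
    have hs1 : rI / c * c ^ 2 = rI * c := by
      field_simp
    have hs2 : (1 - rI / c) * c ^ 2 = rS * c := by
      field_simp; rw [hcdef]; ring
    have hs3 : rI / c * (1 - rI / c) * c ^ 2 = rI * rS := by
      field_simp; rw [hcdef]; ring
    have e1 : ((rI / c) * x * a * (b - y) ^ 2 + (1 - rI / c) * y * b * (a - x) ^ 2) * c ^ 2
        = rI * c * (x * a * (b - y) ^ 2) + rS * c * (y * b * (a - x) ^ 2) := by
      linear_combination (x * a * (b - y) ^ 2) * hs1 + (y * b * (a - x) ^ 2) * hs2
    have e2 : (rI / c) * (1 - rI / c) * (a * b - x * y) ^ 2 * c ^ 2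
        = rI * rS * (a * b - x * y) ^ 2 := by
      linear_combination (a * b - x * y) ^ 2 * hs3
    rw [e1, e2] at hmul
    -- numerator identity
    have hDpos := hDd u hu
    have hnum : rI * rS * (Real.exp (c * u) - x * y) ^ 2 +
        c * ((x * (Real.exp (rS * u) * rS) + y * (Real.exp (rI * u) * rI)) * (Real.exp (c * u) - x * y)
          - (x * Real.exp (rS * u) + y * Real.exp (rI * u) - 2 * (x * y)) * (Real.exp (c * u) * c))
        = rI * rS * (a * b - x * y) ^ 2
          - (rI * c * (x * a * (b - y) ^ 2) + rS * c * (y * b * (a - x) ^ 2)) := by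
      rw [hab, ← hadef, ← hbdef]; ring
    have hnumpos : 0 < rI * rS * (Real.exp (c * u) - x * y) ^ 2 +
        c * ((x * (Real.exp (rS * u) * rS) + y * (Real.exp (rI * u) * rI)) * (Real.exp (c * u) - x * y)
          - (x * Real.exp (rS * u) + y * Real.exp (rI * u) - 2 * (x * y)) * (Real.exp (c * u) * c)) := by
      rw [hnum]; linarith [hmul]
    have hfin : (1 + (c / (rI * rS)) *
        (((x * (Real.exp (rS * u) * rS) + y * (Real.exp (rI * u) * rI)) * (Real.exp (c * u) - x * y)
          - (x * Real.exp (rS * u) + y * Real.exp (rI * u) - 2 * (x * y)) * (Real.exp (c * u) * c)) /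
          (Real.exp (c * u) - x * y) ^ 2)) * (rI * rS * (Real.exp (c * u) - x * y) ^ 2)
        = rI * rS * (Real.exp (c * u) - x * y) ^ 2 +
        c * ((x * (Real.exp (rS * u) * rS) + y * (Real.exp (rI * u) * rI)) * (Real.exp (c * u) - x * y)
          - (x * Real.exp (rS * u) + y * Real.exp (rI * u) - 2 * (x * y)) * (Real.exp (c * u) * c)) := by
      field_simp
    have hpos2 : (0:ℝ) < rI * rS * (Real.exp (c * u) - x * y) ^ 2 := by positivity
    have := hfin.symm ▸ hnumpos
    exact (mul_pos_iff_of_pos_right hpos2).mp (by linarith [hfin ▸ hnumpos] : (0:ℝ) <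
      (1 + (c / (rI * rS)) *
        (((x * (Real.exp (rS * u) * rS) + y * (Real.exp (rI * u) * rI)) * (Real.exp (c * u) - x * y)
          - (x * Real.exp (rS * u) + y * Real.exp (rI * u) - 2 * (x * y)) * (Real.exp (c * u) * c)) /
          (Real.exp (c * u) - x * y) ^ 2)) * (rI * rS * (Real.exp (c * u) - x * y) ^ 2))
    -- strict monotonicity on (0, ∞)
  have hcont : ContinuousOn f (Set.Ioi 0) := fun u hu =>
    ((hasD u hu).continuousAt).continuousWithinAt
  have hmono : StrictMonoOn f (Set.Ioi 0) := by
    apply strictMonoOn_of_deriv_pos (convex_Ioi 0) hcont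
    intro u hu
    rw [interior_Ioi] at hu
    rw [(hasD u hu).deriv]
    exact hderivpos u hu
  -- positivity of EI, ES
  have hEIpos : 0 < EI := by rw [hEI]; apply div_pos (by linarith) hrI
  have hESpos : 0 < ES := by rw [hES]; apply div_pos (by linarith) hrS
  set K : ℝ := 2 * delta + EI + ES with hKdef
  have hdK : delta < K := by rw [hKdef]; linarith
  -- f is positive at K
  have hfK : 0 < f K := by
    have ha1 : 1 < Real.exp (rI * K) := by
      rw [show (1:ℝ) = Real.exp 0 by rw [Real.exp_zero]]
      refine Real.exp_lt_exp.mpr ?_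
      have : 0 < K := by linarith
      positivity
    have hb1 : 1 < Real.exp (rS * K) := by
      rw [show (1:ℝ) = Real.exp 0 by rw [Real.exp_zero]]
      refine Real.exp_lt_exp.mpr ?_
      have : 0 < K := by linarith
      positivity
    have hDK := hDd K (by linarith)
    have hM : 0 < x * Real.exp (rS * K) + y * Real.exp (rI * K) - 2 * (x * y) := by
      nlinarith [mul_lt_mul_of_pos_left hb1 hx0, mul_lt_mul_of_pos_left ha1 hy0]
    have hT : 0 < (c / (rI * rS)) * ((x * Real.exp (rS * K) + y * Real.exp (rI * K) - 2 * (x * y)) /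
        (Real.exp (c * K) - x * y)) := by
      apply mul_pos (by positivity) (div_pos hM hDK)
    have : f K = (c / (rI * rS)) * ((x * Real.exp (rS * K) + y * Real.exp (rI * K) - 2 * (x * y)) /
        (Real.exp (c * K) - x * y)) := by
      rw [hfdef]; simp only []; rw [hKdef]; ring
    rw [this]; exact hT
  -- f is negative at delta
  have hfd : f delta < 0 := by
    set a : ℝ := Real.exp (rI * delta) with hadef
    set b : ℝ := Real.exp (rS * delta) with hbdef
    have ha0 : 0 < a := Real.exp_pos _
    have hb0 : 0 < b := Real.exp_pos _
    have ha1 : 1 < a := by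
      rw [hadef, show (1:ℝ) = Real.exp 0 by rw [Real.exp_zero]]
      exact Real.exp_lt_exp.mpr (by positivity)
    have hb1 : 1 < b := by
      rw [hbdef, show (1:ℝ) = Real.exp 0 by rw [Real.exp_zero]]
      exact Real.exp_lt_exp.mpr (by positivity)
    have hab : Real.exp (c * delta) = a * b := by
      rw [hadef, hbdef, ← Real.exp_add]; congr 1; rw [hcdef]; ring
    -- elementary exponential bounds
    have haL : rI * delta + 1 ≤ a := by
      rw [hadef]; have := Real.add_one_le_exp (rI * delta); linarith
    have hbL : rS * delta + 1 ≤ b := by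
      rw [hbdef]; have := Real.add_one_le_exp (rS * delta); linarith
    have haU : a - 1 ≤ rI * delta * a := by
      have h := Real.add_one_le_exp (-(rI * delta))
      rw [Real.exp_neg, ← hadef] at h
      have := mul_le_mul_of_nonneg_right h ha0.le
      rw [inv_mul_cancel₀ (ne_of_gt ha0)] at this
      nlinarith
    have hbU : b - 1 ≤ rS * delta * b := by
      have h := Real.add_one_le_exp (-(rS * delta))
      rw [Real.exp_neg, ← hbdef] at h
      have := mul_le_mul_of_nonneg_right h hb0.le
      rw [inv_mul_cancel₀ (ne_of_gt hb0)] at this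
      nlinarith
    -- two cross bounds
    have step1 : rI * (b - 1) ≤ rS * b * (a - 1) := by
      have h1 : rI * (b - 1) ≤ rI * (rS * delta * b) := by
        apply mul_le_mul_of_nonneg_left hbU hrI.le
      have h2 : rI * delta ≤ a - 1 := by linarith
      nlinarith [mul_le_mul_of_nonneg_left h2 (by positivity : (0:ℝ) ≤ rS * b)]
    have step2 : rS * (a - 1) ≤ rI * a * (b - 1) := by
      have h1 : rS * (a - 1) ≤ rS * (rI * delta * a) := by
        apply mul_le_mul_of_nonneg_left haU hrS.le
      have h2 : rS * delta ≤ b - 1 := by linarith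
      nlinarith [mul_le_mul_of_nonneg_left h2 (by positivity : (0:ℝ) ≤ rI * a)]
    have hab1 : 1 ≤ a * b := by nlinarith
    -- c (b-1) ≤ (piS rI + rS)(ab - 1), via c(b-1) ≤ rS(ab-1)
    have hcb : c * (b - 1) ≤ rS * (a * b - 1) := by
      rw [hcdef]; nlinarith [step1]
    have hca : c * (a - 1) ≤ rI * (a * b - 1) := by
      rw [hcdef]; nlinarith [step2]
    have hb2 : c * (x * (b - 1)) ≤ x * (piS * rI + rS) * (a * b - 1) := by
      have h1 : c * (x * (b - 1)) = x * (c * (b - 1)) := by ring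
      rw [h1]
      have h2 : x * (c * (b - 1)) ≤ x * (rS * (a * b - 1)) :=
        mul_le_mul_of_nonneg_left hcb hx0.le
      have h3 : x * (rS * (a * b - 1)) ≤ x * (piS * rI + rS) * (a * b - 1) := by
        nlinarith [mul_nonneg (mul_nonneg hpS0 hrI.le) (by linarith : (0:ℝ) ≤ a * b - 1)]
      linarith
    have ha2 : c * (y * (a - 1)) ≤ y * (rI + piI * rS) * (a * b - 1) := by
      have h1 : c * (y * (a - 1)) = y * (c * (a - 1)) := by ring
      rw [h1]
      have h2 : y * (c * (a - 1)) ≤ y * (rI * (a * b - 1)) :=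
        mul_le_mul_of_nonneg_left hca hy0.le
      have h3 : y * (rI * (a * b - 1)) ≤ y * (rI + piI * rS) * (a * b - 1) := by
        nlinarith [mul_nonneg (mul_nonneg hpI0 hrS.le) (by linarith : (0:ℝ) ≤ a * b - 1)]
      linarith
    -- the value at 0 identity
    have hone : c * (x + y - 2 * (x * y)) = (x * (piS * rI + rS) + y * (rI + piI * rS)) * (1 - x * y) := by
      rw [hxdef, hydef, hcdef]; field_simp; ring
    have hE : rI * rS * (EI + ES) = x * (piS * rI + rS) + y * (rI + piI * rS) := by
      rw [hEI, hES, hxdef, hydef]; field_simp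
    -- combine
    have hkey : c * (x * b + y * a - 2 * (x * y)) ≤ rI * rS * (EI + ES) * (a * b - x * y) := by
      have expand : c * (x * b + y * a - 2 * (x * y))
          = c * (x + y - 2 * (x * y)) + c * (x * (b - 1)) + c * (y * (a - 1)) := by ring
      have expand2 : (x * (piS * rI + rS) + y * (rI + piI * rS)) * (1 - x * y)
          + x * (piS * rI + rS) * (a * b - 1) + y * (rI + piI * rS) * (a * b - 1)
          = (x * (piS * rI + rS) + y * (rI + piI * rS)) * (a * b - x * y) := by ring
      rw [hE]
      linarith [hone, hb2, ha2, expand ▸ le_refl (c * (x * b + y * a - 2 * (x * y)))]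
    have hDdel := hDd delta hdelta
    have hD' : 0 < a * b - x * y := by rw [hab] at hDdel; exact hDdel
    have hT : (c / (rI * rS)) * ((x * b + y * a - 2 * (x * y)) / (Real.exp (c * delta) - x * y))
        ≤ EI + ES := by
      rw [hab, div_mul_div_comm, div_le_iff₀ (by positivity : (0:ℝ) < rI * rS * (a * b - x * y))]
      calc c * (x * b + y * a - 2 * (x * y))
          ≤ rI * rS * (EI + ES) * (a * b - x * y) := hkey
        _ = (EI + ES) * (rI * rS * (a * b - x * y)) := by ring
    have hfd_eq : f delta = delta - 2 * delta - EI - ES +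
        (c / (rI * rS)) * ((x * b + y * a - 2 * (x * y)) / (Real.exp (c * delta) - x * y)) := by
      rw [hfdef]
    rw [hfd_eq]; linarith [hT]
  -- conclusion via IVT and strict monotonicity
  have hsub : Set.Icc delta K ⊆ Set.Ioi 0 := fun t ht => lt_of_lt_of_le hdelta ht.1
  have hivt := intermediate_value_Ioo (le_of_lt hdK) (hcont.mono hsub)
  obtain ⟨u0, hu0mem, hfu0⟩ := hivt (⟨hfd, hfK⟩ : (0:ℝ) ∈ Set.Ioo (f delta) (f K))
  have hu0pos : 0 < u0 := lt_trans hdelta hu0mem.1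
  refine ⟨u0, ⟨hu0pos, (hiff u0 hu0pos).mpr hfu0⟩, ?_⟩
  rintro v ⟨hv, hveq⟩
  exact hmono.injOn (Set.mem_Ioi.mpr hv) (Set.mem_Ioi.mpr hu0pos)
    (by rw [(hiff v hv).mp hveq, hfu0])
end
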